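/- For every integer j ≥ 1, every integer n with 1−j ≤ n ≤ j−1, and every integer x with 0 ≤ x ≤ j−1, the symmetric Krawtchouk polynomials satisfy the difference equation 2(j+n)(j−n)·K_{j+n−1}(2x; 1/2, 2(j−1)) = j(2j−1)·K_{j+n}(2x; 1/2, 2j) − j(2j−1)·K_{j+n}(2(x+1); 1/2, 2j). -/

import Mathlib

/-- The Pochhammer symbol `(a)_k = a (a+1) ⋯ (a+k-1)`. -/
noncomputable def poch (a : ℝ) (k : ℕ) : ℝ := ∏ i ∈ Finset.range k, (a + i)

/-- The Krawtchouk polynomial `K_n(x; p, N)` defined by the terminating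
hypergeometric sum `∑_{k=0}^n (−n)_k (−x)_k / ((−N)_k k!) · (1/p)^k`. -/
noncomputable def kraw (n : ℕ) (x : ℝ) (p : ℝ) (N : ℕ) : ℝ :=
  ∑ k ∈ Finset.range (n + 1),
    poch (-(n : ℝ)) k * poch (-x) k / (poch (-(N : ℝ)) k * (Nat.factorial k : ℝ)) * (1 / p) ^ k

/-!
For `p = 1/2` the identity combines two contiguous relations of `K_n(x; p, N)`. The forward
difference in `x`,
  `p (N+1) (K_{n+1}(x; p, N+1) − K_{n+1}(x+1; p, N+1)) = (n+1) K_n(x; p, N)`,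
holds termwise because `(−x)_{k+1} − (−x−1)_{k+1} = (k+1) (−x)_k`. Together with the three-term
relation in the degree and `N` it gives
  `(N+1) ((1−p) K_n(x; p, N+1) + p K_n(x+1; p, N+1)) = (N+1−n) K_n(x; p, N)`.
Adding the forward differences at `2x` and `2x+1` telescopes to `K(2x) − K(2x+2)`, and at
`p = 1/2` the sum of their right-hand sides is twice such an average, hence a single
`K_{j+n−1}(2x; 1/2, 2(j−1))`.
-/

@[simp]
theorem poch_zero (a : ℝ) : poch a 0 = 1 := by simp [poch]

theorem poch_succ_right (a : ℝ) (k : ℕ) : poch a (k + 1) = poch a k * (a + k) :=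
  Finset.prod_range_succ _ k

theorem poch_succ_left (a : ℝ) (k : ℕ) : poch a (k + 1) = a * poch (a + 1) k := by
  rw [poch, Finset.prod_range_succ', poch, mul_comm]
  push_cast
  simp only [add_zero, add_assoc, add_comm (1 : ℝ)]

theorem poch_neg_natCast_succ (N k : ℕ) :
    poch (-((N + 1 : ℕ) : ℝ)) (k + 1) = -(N + 1) * poch (-(N : ℝ)) k := by
  rw [poch_succ_left]
  push_cast
  ring_nf

theorem poch_neg_natCast_ne_zero {N k : ℕ} (h : k ≤ N) : poch (-(N : ℝ)) k ≠ 0 := by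
  refine Finset.prod_ne_zero_iff.mpr fun i hi => ?_
  have : (i : ℝ) < N := by exact_mod_cast (Finset.mem_range.mp hi).trans_le h
  linarith

theorem poch_neg_natCast_eq_zero {n k : ℕ} (h : n < k) : poch (-(n : ℝ)) k = 0 :=
  Finset.prod_eq_zero (Finset.mem_range.mpr h) (by simp)

theorem poch_neg_sub_poch_neg_add_one (x : ℝ) (k : ℕ) :
    poch (-x) (k + 1) - poch (-(x + 1)) (k + 1) = (k + 1) * poch (-x) k := by
  rw [poch_succ_right, poch_succ_left, neg_add, neg_add_cancel_right]
  ring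

theorem kraw_zero (x p : ℝ) (N : ℕ) : kraw 0 x p N = 1 := by
  simp [kraw]

theorem kraw_sub_kraw_add_one (p x : ℝ) (hp : p ≠ 0) (n N : ℕ) :
    p * (N + 1) * (kraw (n + 1) x p (N + 1) - kraw (n + 1) (x + 1) p (N + 1))
      = (n + 1) * kraw n x p N := by
  unfold kraw
  rw [← Finset.sum_sub_distrib, Finset.sum_range_succ']
  simp only [poch_zero, sub_self, add_zero]
  rw [Finset.mul_sum, Finset.mul_sum]
  refine Finset.sum_congr rfl fun k _ => ?_
  have hdiff := poch_neg_sub_poch_neg_add_one x k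
  rw [poch_neg_natCast_succ, poch_neg_natCast_succ, Nat.factorial_succ]
  push_cast
  field_simp
  rw [hdiff, pow_succ]
  field_simp

theorem kraw_eq_sum_range (x p : ℝ) (N : ℕ) {n m : ℕ} (h : n ≤ m) :
    kraw n x p N = ∑ k ∈ Finset.range (m + 1),
      poch (-(n : ℝ)) k * poch (-x) k / (poch (-(N : ℝ)) k * (Nat.factorial k : ℝ)) * (1 / p) ^ k := by
  refine Finset.sum_subset (Finset.range_subset_range.mpr (by omega)) fun k hkm hkn => ?_
  rw [poch_neg_natCast_eq_zero (by simpa using hkn), zero_mul, zero_div, zero_mul]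

theorem kraw_contiguous (p x : ℝ) {n N : ℕ} (hn : n + 1 ≤ N) :
    (N + 1) * kraw (n + 1) x p (N + 1)
      = (n + 1) * kraw n x p N + (N - n) * kraw (n + 1) x p N := by
  rw [kraw_eq_sum_range x p N n.le_succ]
  unfold kraw
  rw [Finset.mul_sum, Finset.mul_sum, Finset.mul_sum, ← Finset.sum_add_distrib]
  refine Finset.sum_congr rfl fun k hk => ?_
  have hkN : k ≤ N := by have := Finset.mem_range.mp hk; omega
  have hP := poch_neg_natCast_ne_zero hkN
  have hP' := poch_neg_natCast_ne_zero (hkN.trans N.le_succ)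
  have hden := poch_neg_natCast_succ N k
  have hnum := poch_neg_natCast_succ n k
  rw [poch_succ_right] at hden hnum
  push_cast at hden hnum hP' ⊢
  field_simp
  linear_combination poch (-x) k * (1 / p) ^ k *
    (poch (-(n + 1 : ℝ)) k * hden - poch (-(N + 1 : ℝ)) k * hnum)

theorem kraw_average (p x : ℝ) (hp : p ≠ 0) {n N : ℕ} (hn : n ≤ N) :
    (N + 1) * ((1 - p) * kraw n x p (N + 1) + p * kraw n (x + 1) p (N + 1))
      = (N + 1 - n) * kraw n x p N := by
  cases n with
  | zero => simp only [kraw_zero]; ring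
  | succ m =>
    have hdiff := kraw_sub_kraw_add_one p x hp m N
    have hcontig := kraw_contiguous p x hn
    push_cast
    linear_combination hcontig - hdiff

theorem kraw_half_difference (y : ℝ) {k J : ℕ} (hk : k ≤ 2 * J) :
    2 * (k + 1) * (2 * J + 1 - k) * kraw k y (1 / 2) (2 * J)
      = (J + 1) * (2 * J + 1) *
          (kraw (k + 1) y (1 / 2) (2 * J + 2) - kraw (k + 1) (y + 2) (1 / 2) (2 * J + 2)) := by
  have hdiff := kraw_sub_kraw_add_one (1 / 2) y (by norm_num) k (2 * J + 1)
  have hdiff' := kraw_sub_kraw_add_one (1 / 2) (y + 1) (by norm_num) k (2 * J + 1)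
  have havg := kraw_average (1 / 2) y (by norm_num) hk
  rw [add_assoc y, one_add_one_eq_two] at hdiff'
  push_cast at hdiff hdiff' havg
  linear_combination -(2 * J + 1) * (hdiff + hdiff') - 2 * (k + 1) * havg

theorem stmt1_general (j n x : ℤ) (hn1 : 1 - j ≤ n) (hn2 : n ≤ j - 1) :
    2 * ((j : ℝ) + (n : ℝ)) * ((j : ℝ) - (n : ℝ)) *
        kraw (j + n - 1).toNat (2 * (x : ℝ)) (1/2) (2 * (j - 1)).toNat
      = (j : ℝ) * (2 * (j : ℝ) - 1) * kraw (j + n).toNat (2 * (x : ℝ)) (1/2) (2 * j).toNat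
        - (j : ℝ) * (2 * (j : ℝ) - 1) *
            kraw (j + n).toNat (2 * ((x : ℝ) + 1)) (1/2) (2 * j).toNat := by
  obtain ⟨k, hk⟩ : ∃ k : ℕ, (k : ℤ) = j + n - 1 := ⟨_, Int.toNat_of_nonneg (by omega)⟩
  obtain ⟨J, hJ⟩ : ∃ J : ℕ, (J : ℤ) = j - 1 := ⟨_, Int.toNat_of_nonneg (by omega)⟩
  have hkJ : k ≤ 2 * J := by omega
  rw [show (j + n - 1).toNat = k by omega, show (2 * (j - 1)).toNat = 2 * J by omega,
    show (j + n).toNat = k + 1 by omega, show (2 * j).toNat = 2 * J + 2 by omega,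
    show 2 * ((x : ℝ) + 1) = 2 * x + 2 by ring]
  have hk' : (k : ℝ) = j + n - 1 := by exact_mod_cast hk
  have hJ' : (J : ℝ) = j - 1 := by exact_mod_cast hJ
  have key := kraw_half_difference (2 * (x : ℝ)) hkJ
  rw [hk', hJ'] at key
  linear_combination key

theorem stmt1 (j n x : ℤ) (hj : 1 ≤ j) (hn1 : 1 - j ≤ n) (hn2 : n ≤ j - 1)
    (hx1 : 0 ≤ x) (hx2 : x ≤ j - 1) :
    2 * ((j : ℝ) + (n : ℝ)) * ((j : ℝ) - (n : ℝ)) *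
        kraw (j + n - 1).toNat (2 * (x : ℝ)) (1/2) (2 * (j - 1)).toNat
      = (j : ℝ) * (2 * (j : ℝ) - 1) * kraw (j + n).toNat (2 * (x : ℝ)) (1/2) (2 * j).toNat
        - (j : ℝ) * (2 * (j : ℝ) - 1) *
            kraw (j + n).toNat (2 * ((x : ℝ) + 1)) (1/2) (2 * j).toNat :=
  stmt1_general j n x hn1 hn2
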